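/- Let 1 ≤ i ≤ N−1, let a ∈ {∘, ∗, ●} = {−1, 0, 1}, and let x, y be words in {−1, 0, 1} with |x| = i−1 and |x| + |y| = N−2. Then T̃_i(F_{xaay}(z; t)) = t·F_{xaay}(z; t); in particular, when a ∈ {±1}, the Laurent polynomial F_{xaay}(z; t) is symmetric in the variables z_i and z_{i+1}. -/

import Mathlib

open scoped BigOperators
open Finset

noncomputable section

namespace RST

/-! ## Rhombic staircase tableaux -/

/-- The four Greek letters `α, β, γ, δ` used to fill tableaux. -/
inductive Greek : Type
  | A | B | G | D
  deriving DecidableEq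

instance : Fintype Greek :=
  ⟨{Greek.A, Greek.B, Greek.G, Greek.D}, by intro x; cases x <;> simp⟩

/-- The number of `0`'s (i.e. `∗`'s) in a word. -/
def nzeros (w : List ℤ) : ℕ := w.count 0

/-- `‖w‖ = length + number of zeros`. -/
def nn (w : List ℤ) : ℕ := w.length + nzeros w

/-- The tiles of the rhombic diagram `Γ(w)` (with its distinguished tiling) are indexed by
pairs `i ≤ j` such that not both `w_i = 0` and `w_j = 0`.  The tile `(i,j)` is a square if
`w_i ≠ 0 ≠ w_j`, a vertical rhombus if `w_i ≠ 0 = w_j`, and a horizontal rhombus if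
`w_i = 0 ≠ w_j`.  Tile `(i,j)` lies in the west-strip (row) of the border tile `i` and in the
north-strip (column) of the border tile `j`; the border tile `j` itself is the tile `(j,j)`
when `w_j ≠ 0`. -/
def IsTile (w : List ℤ) (i j : Fin w.length) : Prop :=
  i ≤ j ∧ ¬(w.get i = 0 ∧ w.get j = 0)

/-- `ColAbove w i' i` says that a tile `(i',j)` lies strictly above the tile `(i,j)` in the
north-strip of the column `j` (in the distinguished tiling, a north-strip consists of its
squares, ordered bottom-to-top by decreasing row index, followed by its horizontal rhombi,
ordered bottom-to-top by decreasing row index). -/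
def ColAbove (w : List ℤ) (i' i : Fin w.length) : Prop :=
  (w.get i' = 0 ∧ w.get i ≠ 0) ∨
    (w.get i' = 0 ∧ w.get i = 0 ∧ i' < i) ∨
    (w.get i' ≠ 0 ∧ w.get i ≠ 0 ∧ i' < i)

/-- A filling of the tiles of `Γ(w)` by Greek letters (`none` = empty tile). -/
abbrev Filling (w : List ℤ) : Type := Fin w.length → Fin w.length → Option Greek

/-- The defining conditions for a rhombic staircase tableau of type `w`. -/
def IsRST (w : List ℤ) (f : Filling w) : Prop :=
  (∀ i j, ¬ IsTile w i j → f i j = none) ∧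
  (∀ j, w.get j = -1 → (f j j = some Greek.B ∨ f j j = some Greek.G)) ∧
  (∀ j, w.get j = 1 → (f j j = some Greek.A ∨ f j j = some Greek.D)) ∧
  (∀ i j, w.get j = 0 → (f i j = none ∨ f i j = some Greek.B ∨ f i j = some Greek.D)) ∧
  (∀ i j, w.get i = 0 → (f i j = none ∨ f i j = some Greek.A ∨ f i j = some Greek.G)) ∧
  (∀ i j i', (f i j = some Greek.A ∨ f i j = some Greek.G) →
      IsTile w i' j → ColAbove w i' i → f i' j = none) ∧
  (∀ i j j', (f i j = some Greek.B ∨ f i j = some Greek.D) →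
      j < j' → IsTile w i j' → f i j' = none)

/-- The nearest nonempty tile to the right of `(i,j)` in its west-strip contains `g`. -/
def SeesRight (w : List ℤ) (f : Filling w) (i j : Fin w.length) (g : Greek) : Prop :=
  ∃ j' : Fin w.length, i ≤ j' ∧ j' < j ∧ f i j' = some g ∧
    ∀ j'' : Fin w.length, j' < j'' → j'' < j → f i j'' = none

/-- The nearest nonempty tile below `(i,j)` in its north-strip contains `g`. -/
def SeesBelow (w : List ℤ) (f : Filling w) (i j : Fin w.length) (g : Greek) : Prop :=
  ∃ i' : Fin w.length, IsTile w i' j ∧ ColAbove w i i' ∧ f i' j = some g ∧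
    ∀ i'' : Fin w.length, IsTile w i'' j → ColAbove w i i'' → ColAbove w i'' i' → f i'' j = none

variable {R : Type*} [CommRing R]

open Classical in
/-- The weight of the tile `(i,j)` in the filling `f` (the Greek letter it contains, if any,
times the appropriate power of `t`). -/
def tileWt (pa pb pg pd pt : R) (w : List ℤ) (f : Filling w) (i j : Fin w.length) : R :=
  if ¬ IsTile w i j then 1
  else
    match f i j with
    | some Greek.A => pa * (if w.get i = 0 then pt else 1)
    | some Greek.B => pb * (if w.get j = 0 then pt else 1)
    | some Greek.G => pg
    | some Greek.D => pd
    | none =>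
      if w.get i ≠ 0 ∧ w.get j = 0 then
        -- empty vertical rhombus
        (if SeesRight w f i j Greek.B then pt ^ 2
         else if SeesRight w f i j Greek.A ∨ SeesRight w f i j Greek.G then pt else 1)
      else if w.get i = 0 ∧ w.get j ≠ 0 then
        -- empty horizontal rhombus
        (if SeesBelow w f i j Greek.A then pt ^ 2
         else if SeesBelow w f i j Greek.B ∨ SeesBelow w f i j Greek.D then pt else 1)
      else
        -- empty square
        (if SeesRight w f i j Greek.B ∨
            ((SeesRight w f i j Greek.A ∨ SeesRight w f i j Greek.G) ∧
              (SeesBelow w f i j Greek.A ∨ SeesBelow w f i j Greek.D)) then pt else 1)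

/-- The weight `wt(T)` of a filling: the product of the weights of all its tiles. -/
def wt (pa pb pg pd pt : R) (w : List ℤ) (f : Filling w) : R :=
  ∏ i : Fin w.length, ∏ j : Fin w.length, tileWt pa pb pg pd pt w f i j

open Classical in
/-- `R(w)`: the generating polynomial of all rhombic staircase tableaux of type `w`. -/
def RR (pa pb pg pd pt : R) (w : List ℤ) : R :=
  ∑ f ∈ Finset.univ.filter (IsRST w), wt pa pb pg pd pt w f

/-- `λ_M = αβt^{M-1} - γδ`. -/
def lamM (pa pb pg pd pt : R) (M : ℕ) : R := pa * pb * pt ^ (M - 1) - pg * pd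

variable {K : Type*} [Field K]

/-- The normalized generating function
`R̃(w) = (t-1)^{N-r} / ∏_{i=2r}^{N+r-1} (αβt^i - γδ) · R(w)`. -/
def Rt (pa pb pg pd pt : K) (w : List ℤ) : K :=
  ((pt - 1) ^ (w.length - nzeros w) /
      ∏ i ∈ Finset.Ico (2 * nzeros w) (w.length + nzeros w), (pa * pb * pt ^ i - pg * pd)) *
    RR pa pb pg pd pt w

/-! ## The ring of Laurent polynomials in `z_1, …, z_N` -/

/-- The ring `L = K[z_1^{±1}, …, z_N^{±1}]` of Laurent polynomials in `N` variables. -/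
abbrev Lp (K : Type*) [Field K] (N : ℕ) : Type _ := AddMonoidAlgebra K (Fin N → ℤ)

variable {N : ℕ}

/-- The constant `c` as a Laurent polynomial. -/
def CC (c : K) : Lp K N := AddMonoidAlgebra.single 0 c

/-- The variable `z_j`. -/
def Z (j : Fin N) : Lp K N := AddMonoidAlgebra.single (Pi.single j 1) 1

/-- The inverse variable `z_j⁻¹`. -/
def Zinv (j : Fin N) : Lp K N := AddMonoidAlgebra.single (Pi.single j (-1)) 1

/-- The coefficient of the Laurent monomial `z^m` in `f`. -/
def coeff (f : Lp K N) (m : Fin N → ℤ) : K := AddMonoidAlgebra.coeff f m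

/-- `f` does not involve the variable `z_v`. -/
def IndepVar (f : Lp K N) (v : Fin N) : Prop :=
  ∀ m : Fin N → ℤ, coeff f m ≠ 0 → m v = 0

/-- `(z^m - s_{uv} z^m)/(z_u - z_v)` as a Laurent polynomial, where `s_{uv}` exchanges the
variables `z_u, z_v`:  for `p = m u ≥ r = m v` this is `∑_{k=0}^{p-r-1} z_u^{r+k} z_v^{p-1-k}`
(times the other variables), and for `p < r` it is `-∑_{k=0}^{r-p-1} z_u^{p+k} z_v^{r-1-k}`. -/
def ddMono (u v : Fin N) (m : Fin N → ℤ) : Lp K N :=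
  if m v ≤ m u then
    ∑ k ∈ Finset.range (m u - m v).toNat,
      AddMonoidAlgebra.single
        (Function.update (Function.update m u (m v + (k : ℤ))) v (m u - 1 - (k : ℤ))) (1 : K)
  else
    - ∑ k ∈ Finset.range (m v - m u).toNat,
      AddMonoidAlgebra.single
        (Function.update (Function.update m u (m u + (k : ℤ))) v (m v - 1 - (k : ℤ))) (1 : K)

/-- The divided difference `f ↦ (f - s_{uv} f)/(z_u - z_v)`. -/
def ddPair (u v : Fin N) (f : Lp K N) : Lp K N :=
  Finsupp.sum (AddMonoidAlgebra.coeff f) fun m c => CC c * ddMono u v m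

/-- Noumi's operator `T̃ = t - (t z_u - z_v) (1 - s_{uv})/(z_u - z_v)` on Laurent polynomials;
for `u, v` the positions of `z_i, z_{i+1}` this is the operator `T̃_i`, `1 ≤ i ≤ N-1`. -/
def Tmid (t : K) (u v : Fin N) (f : Lp K N) : Lp K N :=
  CC t * f - (CC t * Z u - Z v) * ddPair u v f

/-- `(z^m - s₀ z^m)/(z_v - q z_v⁻¹)` as a Laurent polynomial, where `s₀` maps `z_v ↦ q z_v⁻¹`:
for `p = m v ≥ 0` this is `∑_{k=0}^{p-1} q^k z_v^{p-1-2k}` (times the other variables), and for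
`p < 0` it is `-∑_{k=0}^{-p-1} q^{p+k} z_v^{p+1+2k}`. -/
def dd0Mono (q : K) (v : Fin N) (m : Fin N → ℤ) : Lp K N :=
  if 0 ≤ m v then
    ∑ k ∈ Finset.range (m v).toNat,
      AddMonoidAlgebra.single (Function.update m v (m v - 1 - 2 * (k : ℤ))) (q ^ (k : ℕ))
  else
    - ∑ k ∈ Finset.range (-(m v)).toNat,
      AddMonoidAlgebra.single (Function.update m v (m v + 1 + 2 * (k : ℤ))) (q ^ (m v + (k : ℤ)))

/-- The divided difference `f ↦ (f - s₀ f)/(z_v - q z_v⁻¹)`. -/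
def dd0 (q : K) (v : Fin N) (f : Lp K N) : Lp K N :=
  Finsupp.sum (AddMonoidAlgebra.coeff f) fun m c => CC c * dd0Mono q v m

/-- Noumi's operator `T̃₀ = -ac/q - (z₁-a)(z₁-c)/z₁ · (1-s₀)/(z₁ - q z₁⁻¹)`, acting on the
variable `z_v` (with `v` the position of `z₁`); here
`-(z-a)(z-c)/z = -z + (a+c) - ac z⁻¹`. -/
def T0 (a c q : K) (v : Fin N) (f : Lp K N) : Lp K N :=
  CC (-(a * c) / q) * f + (CC (a + c) - Z v - CC (a * c) * Zinv v) * dd0 q v f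

/-- Noumi's operator `T̃_N = -bd + (bz-1)(dz-1)/z · (1-s_N)/(z - z⁻¹)`, acting on the variable
`z_v` (with `v` the position of `z_N`); here `(bz-1)(dz-1)/z = bd z - (b+d) + z⁻¹`, and
`(1 - s_N)/(z - z⁻¹)` is `dd0` with `q = 1`. -/
def TN (b d : K) (v : Fin N) (f : Lp K N) : Lp K N :=
  CC (-(b * d)) * f + (CC (b * d) * Z v - CC (b + d) + Zinv v) * dd0 1 v f

/-- The operator `T̃_j` for `0 ≤ j ≤ N` (`T̃₀`, `T̃_j` with `1 ≤ j ≤ N-1`, or `T̃_N`);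
the identity for `j` out of range. -/
def TT (a b c d q t : K) (N : ℕ) (j : ℕ) : Lp K N → Lp K N :=
  if h0 : j = 0 then (if hN : 0 < N then T0 a c q ⟨0, hN⟩ else id)
  else if hj : j < N then Tmid t ⟨j - 1, by omega⟩ ⟨j, hj⟩
  else if j = N then (if hN : 0 < N then TN b d ⟨N - 1, by omega⟩ else id)
  else id

/-- The Hecke parameter `t_j` (`t₀ = -ac/q`, `t_N = -bd`, `t_j = t` otherwise). -/
def tpar (a b c d q t : K) (N : ℕ) (j : ℕ) : K :=
  if j = 0 then -(a * c) / q else if j = N then -(b * d) else t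

/-- The inverse operator `T̃_j⁻¹ = t_j⁻¹ (T̃_j + (1 - t_j))`. -/
def TTinv (a b c d q t : K) (N : ℕ) (j : ℕ) (f : Lp K N) : Lp K N :=
  CC (tpar a b c d q t N j)⁻¹ * (TT a b c d q t N j f + CC (1 - tpar a b c d q t N j) * f)

/-- Composition of a list of operators (leftmost applied last). -/
def opProd (l : List (Lp K N → Lp K N)) : Lp K N → Lp K N := l.foldr (· ∘ ·) id

/-- The Cherednik operator
`Y_i = (T̃_i T̃_{i+1} ⋯ T̃_{N-1})(T̃_N T̃_{N-1} ⋯ T̃_1 T̃_0)(T̃₁⁻¹ T̃₂⁻¹ ⋯ T̃_{i-1}⁻¹)`. -/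
def Yop (a b c d q t : K) (N : ℕ) (i : ℕ) : Lp K N → Lp K N :=
  opProd (((List.range' i (N - i)).map (TT a b c d q t N)) ++
    (((List.range (N + 1)).reverse).map (TT a b c d q t N)) ++
    ((List.range' 1 (i - 1)).map (TTinv a b c d q t N)))

/-- Exchange of the variables `z_u` and `z_v`. -/
def swapVars (u v : Fin N) (f : Lp K N) : Lp K N :=
  Finsupp.sum (AddMonoidAlgebra.coeff f) fun m c => AddMonoidAlgebra.single (m ∘ (Equiv.swap u v)) c

/-! ## The open boundary ASEP polynomials `F_μ` -/

/-- The word `μ|_{S̄}` obtained from `μ` by deleting the entries in positions of `S`. -/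
def wordOf (N : ℕ) (mu : Fin N → ℤ) (S : Finset (Fin N)) : List ℤ :=
  ((List.finRange N).filter (fun k => decide (k ∉ S))).map mu

/-- The open boundary ASEP polynomial
`F_μ(z;t) = ∑_{S ⊆ V} R̃(μ|_{S̄}) ∏_{i ∈ S} (z_i^{μ_i} - 1)` where `V = {i : μ_i ≠ 0}`. -/
def FF (pa pb pg pd pt : K) (N : ℕ) (mu : Fin N → ℤ) : Lp K N :=
  ∑ S ∈ (Finset.univ.filter fun k => mu k ≠ 0).powerset,
    CC (Rt pa pb pg pd pt (wordOf N mu S)) *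
      ∏ i ∈ S, (AddMonoidAlgebra.single (Pi.single i (mu i)) (1 : K) - 1)

/-- `μ` is a signed permutation of `λ`. -/
def IsSignedPerm (lam mu : Fin N → ℤ) : Prop :=
  ∃ σ : Equiv.Perm (Fin N), ∀ i, mu i = lam (σ i) ∨ mu i = -lam (σ i)

/-- The word `δ = ((-1)^{N-r}, 0^r)`. -/
def deltaWord (N r : ℕ) : Fin N → ℤ := fun k => if (k : ℕ) < N - r then -1 else 0

/-! ## Generic parameter fields -/

/-- The field `ℚ(a,b,c,d,q,t)` of rational functions in six parameters. -/
abbrev K6 : Type := FractionRing (MvPolynomial (Fin 6) ℚ)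

/-- The generators of `K6`. -/
def gen6 (k : Fin 6) : K6 := algebraMap (MvPolynomial (Fin 6) ℚ) K6 (MvPolynomial.X k)

/-- The parameters `a, b, c, d, q, t` in `ℚ(a,b,c,d,q,t)`. -/
def pA : K6 := gen6 0
def pB : K6 := gen6 1
def pC : K6 := gen6 2
def pD : K6 := gen6 3
def pQ : K6 := gen6 4
def pT : K6 := gen6 5

/-- The change of variables `α = -ac(1-t)/((a-1)(c-1))`. -/
def chA : K6 := -(pA * pC) * (1 - pT) / ((pA - 1) * (pC - 1))
/-- The change of variables `γ = (1-t)/((a-1)(c-1))`. -/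
def chG : K6 := (1 - pT) / ((pA - 1) * (pC - 1))
/-- The change of variables `β = -bd(1-t)/((b-1)(d-1))`. -/
def chB : K6 := -(pB * pD) * (1 - pT) / ((pB - 1) * (pD - 1))
/-- The change of variables `δ = (1-t)/((b-1)(d-1))`. -/
def chD : K6 := (1 - pT) / ((pB - 1) * (pD - 1))

/-- The field `ℚ(α,β,γ,δ,t)` of rational functions in five parameters. -/
abbrev K5 : Type := FractionRing (MvPolynomial (Fin 5) ℚ)

/-- The generators of `K5`. -/
def gen5 (k : Fin 5) : K5 := algebraMap (MvPolynomial (Fin 5) ℚ) K5 (MvPolynomial.X k)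

/-- The parameters `α, β, γ, δ, t` in `ℚ(α,β,γ,δ,t)`. -/
def vA : K5 := gen5 0
def vB : K5 := gen5 1
def vG : K5 := gen5 2
def vD : K5 := gen5 3
def vT : K5 := gen5 4

/-- Words of length `N` with entries in `{-1,0,1}` having exactly `r` zeros, as a finite set
of functions `Fin N → ℤ`. -/
def WordsF (N r : ℕ) : Finset (Fin N → ℤ) :=
  (Finset.univ.image fun g : Fin N → Fin 3 => fun k => ((g k : ℤ) - 1)).filter
    fun mu => (Finset.univ.filter fun k => mu k = 0).card = r

/-- `R(μ)` for a word given as a function `Fin N → ℤ`. -/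
def RRw (pa pb pg pd pt : R) (N : ℕ) (mu : Fin N → ℤ) : R :=
  RR pa pb pg pd pt ((List.finRange N).map mu)

open Classical in
/-- The total weighted jump rate (without the normalization `1/(N+1)`) from state `μ` to
state `ν` in the two-species open boundary ASEP. -/
def jump (pa pb pg pd pt : K) (N : ℕ) (mu nu : Fin N → ℤ) : K :=
  (∑ u : Fin N,
    if h : (u : ℕ) + 1 < N then
      ((if nu = mu ∘ Equiv.swap u ⟨(u : ℕ) + 1, h⟩ ∧
            ((mu u, mu ⟨(u : ℕ) + 1, h⟩) = (1, -1) ∨ (mu u, mu ⟨(u : ℕ) + 1, h⟩) = (1, 0) ∨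
              (mu u, mu ⟨(u : ℕ) + 1, h⟩) = (0, -1)) then pt else 0) +
        (if nu = mu ∘ Equiv.swap u ⟨(u : ℕ) + 1, h⟩ ∧
            ((mu u, mu ⟨(u : ℕ) + 1, h⟩) = (-1, 1) ∨ (mu u, mu ⟨(u : ℕ) + 1, h⟩) = (0, 1) ∨
              (mu u, mu ⟨(u : ℕ) + 1, h⟩) = (-1, 0)) then 1 else 0))
    else 0) +
  (if hN : 0 < N then
      ((if mu ⟨0, hN⟩ = -1 ∧ nu = Function.update mu ⟨0, hN⟩ 1 then pa else 0) +
        (if mu ⟨0, hN⟩ = 1 ∧ nu = Function.update mu ⟨0, hN⟩ (-1) then pg else 0) +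
        (if mu ⟨N - 1, by omega⟩ = 1 ∧ nu = Function.update mu ⟨N - 1, by omega⟩ (-1) then pb
          else 0) +
        (if mu ⟨N - 1, by omega⟩ = -1 ∧ nu = Function.update mu ⟨N - 1, by omega⟩ 1 then pd
          else 0))
    else 0)

open Classical in
/-- The one-step transition matrix of the two-species open boundary ASEP on the set of states
with exactly `r` zeros: off-diagonal entries are the jump rates divided by `N+1`, and the
diagonal entry is the complementary probability. -/
def Pmat (pa pb pg pd pt : K) (N r : ℕ) (mu nu : Fin N → ℤ) : K :=
  jump pa pb pg pd pt N mu nu / (N + 1) +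
    (if nu = mu then 1 - (∑ x ∈ WordsF N r, jump pa pb pg pd pt N mu x) / (N + 1) else 0)

/-- A list as a word-function (entries beyond the length are `0`). -/
def funOf (N : ℕ) (w : List ℤ) : Fin N → ℤ := fun k => w.getD (k : ℕ) 0

end RST

/-!
A Laurent polynomial fixed by the exchange `s_{uv}` of `z_u` and `z_v` is killed by the divided
difference `(1 - s_{uv})/(z_u - z_v)`, so `T̃_i` acts on it as multiplication by `t`. And `F_μ` is
fixed by `s_i` as soon as `μ_i = μ_{i+1}`: the involution `S ↦ s_i(S)` of index sets permutes the
terms of `F_μ`, because deleting either of two equal adjacent letters of `μ` gives the same word.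
-/

namespace RST

open Equiv

lemma comp_swap_eq_self {α β : Type*} [DecidableEq α] {m : α → β} {u v : α} (h : m u = m v) :
    m ∘ swap u v = m := by
  rw [comp_swap_eq_update, h, Function.update_eq_self, ← h, Function.update_eq_self]

lemma pi_single_comp_swap {α β : Type*} [DecidableEq α] [Zero β] (a u v : α) (c : β) :
    Pi.single a c ∘ swap u v = Pi.single (swap u v a) c := by
  funext k
  simp [Pi.single_apply, swap_apply_eq_iff]

lemma getD_append_pair {α : Type*} (x y : List α) (a d : α) {k : ℕ}
    (hk : k = x.length ∨ k = x.length + 1) : (x ++ [a, a] ++ y).getD k d = a := by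
  rcases hk with rfl | rfl <;> simp [List.getD_eq_getElem?_getD]

variable {K : Type*} [Field K] {N : ℕ}

lemma ddMono_of_eq {u v : Fin N} {m : Fin N → ℤ} (h : m u = m v) : ddMono (K := K) u v m = 0 := by
  simp [ddMono, h]

lemma update_update_comp_swap (m : Fin N → ℤ) (u v : Fin N) (a b : ℤ) :
    Function.update (Function.update (m ∘ swap u v) u a) v b =
      Function.update (Function.update m u a) v b := by
  funext j
  rcases eq_or_ne j v with rfl | hv
  · simp
  rcases eq_or_ne j u with rfl | hu
  · simp [Function.update_of_ne hv]
  · simp [Function.update_of_ne hv, Function.update_of_ne hu, swap_apply_of_ne_of_ne hu hv]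

lemma ddMono_comp_swap (u v : Fin N) (m : Fin N → ℤ) :
    ddMono (K := K) u v (m ∘ swap u v) = -ddMono u v m := by
  have hu : (m ∘ swap u v) u = m v := by simp
  have hv : (m ∘ swap u v) v = m u := by simp
  simp only [ddMono, hu, hv, update_update_comp_swap]
  rcases lt_trichotomy (m u) (m v) with h | h | h
  · rw [if_pos h.le, if_neg (not_le.mpr h), neg_neg]
  · simp [h]
  · rw [if_neg (not_le.mpr h), if_pos h.le]

def swapRingHom (u v : Fin N) : Lp K N →+* Lp K N :=
  AddMonoidAlgebra.mapDomainRingHom K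
    (AddMonoidHom.mk' (fun m : Fin N → ℤ => m ∘ swap u v) fun _ _ => rfl)

lemma swapVars_eq_swapRingHom (u v : Fin N) (f : Lp K N) :
    swapVars u v f = swapRingHom u v f := by
  show _ = AddMonoidAlgebra.ofCoeff (Finsupp.mapDomain _ f.coeff)
  rw [Finsupp.mapDomain, AddMonoidAlgebra.ofCoeff_finsuppSum]
  rfl

lemma swapRingHom_single (u v : Fin N) (m : Fin N → ℤ) (c : K) :
    swapRingHom u v (AddMonoidAlgebra.single m c) = AddMonoidAlgebra.single (m ∘ swap u v) c :=
  AddMonoidAlgebra.mapDomain_single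

lemma swapRingHom_CC (u v : Fin N) (c : K) : swapRingHom u v (CC c : Lp K N) = CC c :=
  swapRingHom_single u v 0 c

lemma coeff_comp_swap_of_swapVars_eq {u v : Fin N} {f : Lp K N} (hf : swapVars u v f = f)
    (m : Fin N → ℤ) : AddMonoidAlgebra.coeff f (m ∘ swap u v) = AddMonoidAlgebra.coeff f m := by
  have hinj : Function.Injective fun m : Fin N → ℤ => m ∘ swap u v :=
    (swap u v).surjective.injective_comp_right
  conv_lhs => rw [← hf, swapVars_eq_swapRingHom]
  exact Finsupp.mapDomain_apply hinj f.coeff m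

lemma ddPair_eq_zero_of_swapVars_eq {u v : Fin N} {f : Lp K N} (hf : swapVars u v f = f) :
    ddPair u v f = 0 := by
  classical
  rw [ddPair, Finsupp.sum]
  -- pair the monomials `z^m` and `s_{uv} z^m`; the fixed points have `m u = m v`
  refine Finset.sum_involution (fun m _ => m ∘ swap u v) (fun m _ => ?_) (fun m _ hm hfix => ?_)
    (fun m hm => ?_) (fun m _ => ?_)
  · rw [coeff_comp_swap_of_swapVars_eq hf, ddMono_comp_swap, mul_neg, add_neg_cancel]
  · refine absurd ?_ hm
    rw [ddMono_of_eq (by simpa using (congrFun hfix u).symm), mul_zero]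
  · rwa [Finsupp.mem_support_iff, coeff_comp_swap_of_swapVars_eq hf, ← Finsupp.mem_support_iff]
  · exact funext fun j => congrArg m (swap_apply_self u v j)

lemma Tmid_eq_of_swapVars_eq (t : K) {u v : Fin N} {f : Lp K N} (hf : swapVars u v f = f) :
    Tmid t u v f = CC t * f := by
  rw [Tmid, ddPair_eq_zero_of_swapVars_eq hf, mul_zero, sub_zero]

lemma lt_of_mem_take_finRange {k : ℕ} {a : Fin N} (ha : a ∈ (List.finRange N).take k) :
    (a : ℕ) < k := by
  obtain ⟨j, hj, rfl⟩ := List.mem_take_iff_getElem.1 ha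
  simp only [List.getElem_finRange, Fin.val_cast]
  omega

lemma le_of_mem_drop_finRange {k : ℕ} {a : Fin N} (ha : a ∈ (List.finRange N).drop k) :
    k ≤ (a : ℕ) := by
  obtain ⟨j, hj, rfl⟩ := List.mem_drop_iff_getElem.1 ha
  simp only [List.getElem_finRange, Fin.val_cast]
  omega

lemma finRange_eq_take_append_cons_cons_drop {u v : Fin N} (hadj : (u : ℕ) + 1 = v) :
    List.finRange N = (List.finRange N).take u ++ u :: v :: (List.finRange N).drop (u + 2) := by
  have hu : (u : ℕ) < (List.finRange N).length := by simp
  have hv : (u : ℕ) + 1 < (List.finRange N).length := by simp [hadj]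
  conv_lhs => rw [← List.take_append_drop u (List.finRange N)]
  rw [List.drop_eq_getElem_cons hu, List.drop_eq_getElem_cons hv]
  simp only [List.getElem_finRange, List.append_cancel_left_eq, List.cons.injEq]
  exact ⟨Fin.ext rfl, Fin.ext hadj, trivial⟩

lemma wordOf_map_swap (mu : Fin N → ℤ) {u v : Fin N} (hadj : (u : ℕ) + 1 = v) (hmu : mu u = mu v)
    (S : Finset (Fin N)) :
    wordOf N mu (S.map (swap u v).toEmbedding) = wordOf N mu S := by
  have hmem : ∀ a, a ∈ S.map (swap u v).toEmbedding ↔ swap u v a ∈ S := by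
    simp [Finset.mem_map_equiv]
  have hfix : ∀ a : Fin N, (a : ℕ) < u ∨ (u : ℕ) + 2 ≤ a → swap u v a = a := fun a ha =>
    swap_apply_of_ne_of_ne (by rintro rfl; omega) (by rintro rfl; omega)
  have htake : ((List.finRange N).take u).filter (fun a => swap u v a ∉ S) =
      ((List.finRange N).take u).filter (fun a => a ∉ S) :=
    List.filter_congr fun a ha => by rw [hfix a (.inl (lt_of_mem_take_finRange ha))]
  have hdrop : ((List.finRange N).drop (u + 2)).filter (fun a => swap u v a ∉ S) =
      ((List.finRange N).drop (u + 2)).filter (fun a => a ∉ S) :=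
    List.filter_congr fun a ha => by rw [hfix a (.inr (le_of_mem_drop_finRange ha))]
  rw [wordOf, wordOf, finRange_eq_take_append_cons_cons_drop hadj]
  simp only [List.filter_append, List.filter_cons, hmem, swap_apply_left, swap_apply_right, htake,
    hdrop]
  by_cases hu : u ∈ S <;> by_cases hv : v ∈ S <;> simp [hu, hv, hmu]

lemma swapVars_FF_of_eq (pa pb pg pd pt : K) {mu : Fin N → ℤ} {u v : Fin N}
    (hadj : (u : ℕ) + 1 = v) (hmu : mu u = mu v) :
    swapVars u v (FF pa pb pg pd pt N mu) = FF pa pb pg pd pt N mu := by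
  have hmu' : ∀ a, mu (swap u v a) = mu a := congrFun (comp_swap_eq_self hmu)
  have hV : (Finset.univ.filter fun k => mu k ≠ 0).map (swap u v).toEmbedding =
      Finset.univ.filter fun k => mu k ≠ 0 := by
    ext a
    simp [Finset.mem_map_equiv, hmu']
  rw [swapVars_eq_swapRingHom, FF, map_sum]
  refine Finset.sum_equiv (swap u v).finsetCongr (fun S => ?_) (fun S _ => ?_)
  · rw [finsetCongr_apply, Finset.mem_powerset, Finset.mem_powerset, ← Finset.map_subset_map,
      hV]
  · rw [finsetCongr_apply, map_mul, swapRingHom_CC, wordOf_map_swap mu hadj hmu, map_prod,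
      Finset.prod_map]
    congr 1
    refine Finset.prod_congr rfl fun a _ => ?_
    rw [map_sub, map_one, swapRingHom_single, pi_single_comp_swap]
    simp only [Function.Embedding.coeFn_mk, hmu']

/-- For `1 ≤ i ≤ N-1`, `a ∈ {-1,0,1}` and words `x, y` in `{-1,0,1}` with
`|x| = i-1`, `|x|+|y| = N-2`, we have `T̃_i(F_{xaay}) = t F_{xaay}`; in particular, when
`a ∈ {±1}`, the Laurent polynomial `F_{xaay}` is symmetric in the variables `z_i, z_{i+1}`. -/
theorem statement14 (N : ℕ) (i : ℕ) (h1 : 1 ≤ i) (h2 : i ≤ N - 1) (aa : ℤ)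
    (x y : List ℤ) (hxl : x.length = i - 1) :
    (Tmid vT ⟨i - 1, by omega⟩ ⟨i, by omega⟩
        (FF vA vB vG vD vT N (funOf N (x ++ [aa, aa] ++ y))) =
      CC vT * FF vA vB vG vD vT N (funOf N (x ++ [aa, aa] ++ y))) ∧
    ((aa = -1 ∨ aa = 1) →
      swapVars ⟨i - 1, by omega⟩ ⟨i, by omega⟩
          (FF vA vB vG vD vT N (funOf N (x ++ [aa, aa] ++ y))) =
        FF vA vB vG vD vT N (funOf N (x ++ [aa, aa] ++ y))) := by
  have hpair : funOf N (x ++ [aa, aa] ++ y) ⟨i - 1, by omega⟩ =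
      funOf N (x ++ [aa, aa] ++ y) ⟨i, by omega⟩ := by
    simp only [funOf]
    rw [getD_append_pair x y aa 0 (.inl (by omega)), getD_append_pair x y aa 0 (.inr (by omega))]
  have hsymm := swapVars_FF_of_eq vA vB vG vD vT (by simp only; omega) hpair
  exact ⟨Tmid_eq_of_swapVars_eq vT hsymm, fun _ => hsymm⟩

end RST
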